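/- arXiv:2412.04932 — 3 statements merged into one kernel-verified Lean document; each statement's English description precedes it below -/
import Mathlib

section
/- Let Γ = (Γ, ≤, μ, (φ_x)_{x∈V(Γ)}) be a trickle graph and let Γ̃ = (Γ, ≤, μ, (φ_x^{-1})_{x∈V(Γ)}) be its dual trickle graph (which is again a trickle graph). Then the dual trickle group of Γ̃, defined by the presentation ⟨V(Γ) | x^{μ(x)} = 1 for x ∈ V(Γ) with μ(x) ≠ ∞, and x·φ_x^{-1}(y) = y·φ_y^{-1}(x) for {x,y} ∈ E(Γ)⟩, is isomorphic to Tr(Γ) via the map sending each generator x to x. -/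
open scoped Classical

universe u

namespace SimpleGraph

/-- `y` belongs to the star of `x` in `G` (i.e. `y = x` or `y` is a neighbour of `x`). -/
def InStar {V : Type u} (G : SimpleGraph V) (x y : V) : Prop := y = x ∨ G.Adj x y

end SimpleGraph

/-- A **trickle graph**: a simplicial graph together with a partial order on the vertices,
a vertex labeling `mu` with values in `ℕ≥2 ∪ {∞}`, and, for every vertex `x`, an automorphism
`phi x` of the star of `x` (encoded as a permutation of the whole vertex set fixing every
vertex outside of the star of `x`), subject to conditions (a)–(g) of Bellingeri–Chemin–Paris. -/
structure TrickleGraph (V : Type u) [PartialOrder V] where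
  /-- the underlying simplicial graph -/
  graph : SimpleGraph V
  /-- the vertex labeling, with `⊤` playing the role of `∞` -/
  mu : V → ℕ∞
  /-- the automorphism of the star of each vertex, extended by the identity -/
  phi : V → Equiv.Perm V
  two_le_mu : ∀ x : V, 2 ≤ mu x
  /-- condition (a) -/
  adj_of_lt : ∀ x y : V, x < y → graph.Adj x y
  /-- `phi x` is supported on the star of `x` -/
  phi_apply_of_not_inStar : ∀ x y : V, ¬ graph.InStar x y → phi x y = y
  /-- `phi x` maps the star of `x` to itself -/
  inStar_phi : ∀ x y : V, graph.InStar x y → graph.InStar x (phi x y)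
  /-- `phi x` is a graph automorphism of the (full subgraph spanned by the) star of `x` -/
  adj_phi_iff : ∀ x y z : V, graph.InStar x y → graph.InStar x z →
      (graph.Adj (phi x y) (phi x z) ↔ graph.Adj y z)
  /-- condition (b) -/
  adj_incomp : ∀ x y z : V, graph.Adj x y → ¬ x ≤ y → ¬ y ≤ x → z ≤ y →
      graph.Adj x z ∧ ¬ x ≤ z ∧ ¬ z ≤ x
  /-- condition (c) -/
  le_phi_iff : ∀ x y z : V, graph.InStar x y → graph.InStar x z →
      (phi x z ≤ phi x y ↔ z ≤ y)
  /-- condition (d) -/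
  lt_of_phi_ne : ∀ x y : V, graph.InStar x y → phi x y ≠ y → y < x
  /-- condition (e): if `mu x` is finite then the order of `phi x` divides `mu x` -/
  phi_pow_mu : ∀ x : V, phi x ^ WithTop.untopD 0 (mu x) = 1
  /-- condition (f) -/
  mu_phi : ∀ x y : V, graph.InStar x y → mu (phi x y) = mu y
  /-- condition (g) -/
  phi_phi : ∀ x y z : V, z < y → y < x →
      phi x (phi y z) = phi (phi x y) (phi x z)

namespace TrickleGraph

variable {V : Type u} [PartialOrder V]

/-- The set of defining relators of the trickle group: `x ^ (mu x)` whenever `mu x ≠ ∞`, and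
`phi_x(y) · x · (phi_y(x) · y)⁻¹` for every edge `{x, y}`. -/
def rels (T : TrickleGraph V) : Set (FreeGroup V) :=
  {r | ∃ (x : V) (n : ℕ), T.mu x = (n : ℕ∞) ∧ r = FreeGroup.of x ^ n} ∪
  {r | ∃ x y : V, T.graph.Adj x y ∧
      r = FreeGroup.of (T.phi x y) * FreeGroup.of x *
          (FreeGroup.of (T.phi y x) * FreeGroup.of y)⁻¹}

end TrickleGraph

/-- The **trickle group** of a trickle graph. -/
abbrev TrickleGroup {V : Type u} [PartialOrder V] (T : TrickleGraph V) : Type u :=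
  PresentedGroup T.rels

namespace TrickleGraph

variable {V : Type u} [PartialOrder V]

/-- The image of a vertex in the trickle group. -/
def gen (T : TrickleGraph V) (x : V) : TrickleGroup T := PresentedGroup.of x

/-- `mu` converted to a natural number, with `∞` mapped to `0` (so that `ZMod (T.muNat x)`
is the group `ℤ_{mu x}` of the paper, `ZMod 0 = ℤ` corresponding to `mu x = ∞`). -/
def muNat (T : TrickleGraph V) (x : V) : ℕ := WithTop.untopD 0 (T.mu x)

/-- The power `phi_x^a` for an exponent `a ∈ ℤ_{mu x}`; it is well defined on representatives
by condition (e). -/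
def phiPow (T : TrickleGraph V) (x : V) (a : ZMod (T.muNat x)) : Equiv.Perm V :=
  T.phi x ^ (ZMod.cast a : ℤ)

theorem mu_phi_apply (T : TrickleGraph V) (x y : V) : T.mu (T.phi x y) = T.mu y := by
  by_cases h : T.graph.InStar x y
  · exact T.mu_phi x y h
  · rw [T.phi_apply_of_not_inStar x y h]

theorem mu_phi_zpow (T : TrickleGraph V) (x : V) :
    ∀ (n : ℤ) (y : V), T.mu ((T.phi x ^ n) y) = T.mu y := by
  have hinv : ∀ y : V, T.mu ((T.phi x)⁻¹ y) = T.mu y := by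
    intro y
    conv_rhs => rw [← Equiv.apply_symm_apply (T.phi x) y]
    exact (T.mu_phi_apply x ((T.phi x)⁻¹ y)).symm
  intro n
  induction n using Int.induction_on with
  | zero => intro y; simp
  | succ k ih =>
      intro y
      have h : (T.phi x ^ ((k : ℤ) + 1)) y = (T.phi x ^ (k : ℤ)) (T.phi x y) := by
        rw [zpow_add_one]; rfl
      rw [h, ih (T.phi x y), T.mu_phi_apply]
  | pred k ih =>
      intro y
      have h : (T.phi x ^ (-(k : ℤ) - 1)) y = (T.phi x ^ (-(k : ℤ))) ((T.phi x)⁻¹ y) := by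
        rw [zpow_sub_one]; rfl
      rw [h, ih ((T.phi x)⁻¹ y), hinv]

theorem mu_phiPow (T : TrickleGraph V) (x : V) (a : ZMod (T.muNat x)) (y : V) :
    T.mu ((T.phiPow x a) y) = T.mu y :=
  T.mu_phi_zpow x _ y

theorem muNat_phiPow (T : TrickleGraph V) (x : V) (a : ZMod (T.muNat x)) (y : V) :
    T.muNat ((T.phiPow x a) y) = T.muNat y :=
  congrArg (fun m : ℕ∞ => WithTop.untopD 0 m) (T.mu_phiPow x a y)

end TrickleGraph

/-- Transport of a `ZMod` element along an equality of moduli. -/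
def zmodCongr {m k : ℕ} (h : m = k) (a : ZMod m) : ZMod k := by subst h; exact a

theorem zmodCongr_ne_zero {m k : ℕ} (h : m = k) {a : ZMod m} (ha : a ≠ 0) :
    zmodCongr h a ≠ 0 := by subst h; exact ha

/-- A **syllable** `x^a`, where `x` is a vertex and `a ∈ ℤ_{mu x} \ {0}`. -/
def Syllable {V : Type u} [PartialOrder V] (T : TrickleGraph V) : Type u :=
  Σ x : V, {a : ZMod (T.muNat x) // a ≠ 0}

namespace Syllable

variable {V : Type u} [PartialOrder V] {T : TrickleGraph V}

/-- The element of the trickle group represented by a syllable. -/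
def elm (s : Syllable T) : TrickleGroup T :=
  (PresentedGroup.of s.1 : TrickleGroup T) ^ (ZMod.cast s.2.val : ℤ)

end Syllable

/-- Syllabic words. -/
abbrev SylWord {V : Type u} [PartialOrder V] (T : TrickleGraph V) := List (Syllable T)

/-- The element of the trickle group represented by a syllabic word. -/
def SylWord.eval {V : Type u} [PartialOrder V] {T : TrickleGraph V} (w : SylWord T) :
    TrickleGroup T :=
  (w.map Syllable.elm).prod

/-- The defining relators of the **dual trickle group** of a trickle graph:
`x ^ (mu x)` whenever `mu x ≠ ∞`, and `x · phi_x(y) · (y · phi_y(x))⁻¹` for each edge. -/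
def TrickleGraph.dualRels {V : Type u} [PartialOrder V] (T : TrickleGraph V) :
    Set (FreeGroup V) :=
  {r | ∃ (x : V) (n : ℕ), T.mu x = (n : ℕ∞) ∧ r = FreeGroup.of x ^ n} ∪
  {r | ∃ x y : V, T.graph.Adj x y ∧
      r = FreeGroup.of x * FreeGroup.of (T.phi x y) *
          (FreeGroup.of y * FreeGroup.of (T.phi y x))⁻¹}

/-!
The map `(x, y) ↦ (φ_x(y), φ_y(x))` sends edges of `Γ` to edges and is inverted by
`(a, b) ↦ (φ_a⁻¹(b), φ_b⁻¹(a))`; it carries the relation `φ_x(y) · x = φ_y(x) · y` of `Tr(Γ)` to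
the relation `a · φ_a⁻¹(b) = b · φ_b⁻¹(a)` of the dual trickle group of `Γ̃`. Hence both
presentations have literally the same set of relators. Both facts rest on condition (d): on an
edge `{x, y}` with `y < x` only `y` moves, and it stays below `x`.
-/

theorem Equiv.Perm.rel_inv_apply_iff {α : Type*} {f : Equiv.Perm α} {p : α → Prop}
    (hp : ∀ y, p y → p (f⁻¹ y)) (r : α → α → Prop)
    (hr : ∀ y z, p y → p z → (r (f y) (f z) ↔ r y z)) :
    ∀ y z, p y → p z → (r (f⁻¹ y) (f⁻¹ z) ↔ r y z) := by
  intro y z hy hz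
  simpa using (hr _ _ (hp y hy) (hp z hz)).symm

namespace TrickleGraph

variable {V : Type u} [PartialOrder V] (T : TrickleGraph V)

theorem phi_apply_eq_self_of_not_lt {x y : V} (h : ¬ y < x) : T.phi x y = y := by
  by_contra hne
  by_cases hy : T.graph.InStar x y
  · exact h (T.lt_of_phi_ne x y hy hne)
  · exact hne (T.phi_apply_of_not_inStar x y hy)

theorem lt_of_phi_apply_ne {x y : V} (h : T.phi x y ≠ y) : y < x := by
  by_contra hy
  exact h (T.phi_apply_eq_self_of_not_lt hy)

/-- `φ_x` fixes every vertex outside `{y | y < x}`, so it permutes that set. -/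
theorem phi_apply_lt_iff {x y : V} : T.phi x y < x ↔ y < x := by
  constructor
  · intro h
    by_contra hy
    exact hy (T.phi_apply_eq_self_of_not_lt hy ▸ h)
  · intro h
    by_contra hφ
    exact hφ (by rwa [(T.phi x).injective (T.phi_apply_eq_self_of_not_lt hφ)])

theorem inv_phi_apply_lt_iff {x y : V} : (T.phi x)⁻¹ y < x ↔ y < x := by
  simpa using (T.phi_apply_lt_iff (x := x) (y := (T.phi x)⁻¹ y)).symm

theorem inStar_inv_phi {x y : V} (h : T.graph.InStar x y) :
    T.graph.InStar x ((T.phi x)⁻¹ y) := by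
  by_contra hns
  have hfix := T.phi_apply_of_not_inStar x _ hns
  simp only [Equiv.Perm.coe_inv, Equiv.apply_symm_apply] at hfix
  exact hns (hfix ▸ h)

theorem inStar_of_lt {x y : V} (h : y < x) : T.graph.InStar x y :=
  Or.inr (T.adj_of_lt y x h).symm

theorem inv_phi_le_inv_phi_iff {x y z : V} (hy : T.graph.InStar x y)
    (hz : T.graph.InStar x z) : (T.phi x)⁻¹ z ≤ (T.phi x)⁻¹ y ↔ z ≤ y :=
  Equiv.Perm.rel_inv_apply_iff (p := T.graph.InStar x) (fun _ => T.inStar_inv_phi) (· ≤ ·)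
    (fun z y hz hy => T.le_phi_iff x y z hy hz) z y hz hy

theorem inv_phi_lt_inv_phi {x y z : V} (hzx : z < x) (hyx : y < x) (hzy : z < y) :
    (T.phi x)⁻¹ z < (T.phi x)⁻¹ y :=
  lt_of_le_of_ne ((T.inv_phi_le_inv_phi_iff (T.inStar_of_lt hyx) (T.inStar_of_lt hzx)).2 hzy.le)
    fun h => hzy.ne ((T.phi x)⁻¹.injective h)

/-- Condition (g) for the inverse automorphisms, obtained from (g) at `w < φ_x⁻¹(y) < x`. -/
theorem inv_phi_inv_phi {x y z : V} (hzy : z < y) (hyx : y < x) :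
    (T.phi x)⁻¹ ((T.phi y)⁻¹ z) = (T.phi ((T.phi x)⁻¹ y))⁻¹ ((T.phi x)⁻¹ z) := by
  set y' := (T.phi x)⁻¹ y
  set w := (T.phi x)⁻¹ ((T.phi y)⁻¹ z)
  have hz'y : (T.phi y)⁻¹ z < y := T.inv_phi_apply_lt_iff.2 hzy
  have hwy' : w < y' := T.inv_phi_lt_inv_phi (hz'y.trans hyx) hyx hz'y
  have hg := T.phi_phi x y' w hwy' (T.inv_phi_apply_lt_iff.2 hyx)
  rw [show T.phi x y' = y by simp [y'], show T.phi x w = (T.phi y)⁻¹ z by simp [w],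
    Equiv.Perm.coe_inv, Equiv.apply_symm_apply] at hg
  rw [Equiv.Perm.eq_inv_iff_eq, Equiv.Perm.eq_inv_iff_eq, hg]

def dual : TrickleGraph V where
  graph := T.graph
  mu := T.mu
  phi x := (T.phi x)⁻¹
  two_le_mu := T.two_le_mu
  adj_of_lt := T.adj_of_lt
  phi_apply_of_not_inStar x y h :=
    Equiv.Perm.inv_eq_iff_eq.2 (T.phi_apply_of_not_inStar x y h).symm
  inStar_phi _ _ := T.inStar_inv_phi
  adj_phi_iff x :=
    Equiv.Perm.rel_inv_apply_iff (p := T.graph.InStar x) (fun _ => T.inStar_inv_phi) T.graph.Adj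
      (T.adj_phi_iff x)
  adj_incomp := T.adj_incomp
  le_phi_iff _ _ _ := T.inv_phi_le_inv_phi_iff
  lt_of_phi_ne x y _ hne := by
    have hy : (T.phi x)⁻¹ y < x :=
      T.lt_of_phi_apply_ne fun h => hne (by simpa using h.symm)
    exact T.inv_phi_apply_lt_iff.1 hy
  phi_pow_mu x := by rw [inv_pow, inv_eq_one]; exact T.phi_pow_mu x
  mu_phi x y _ := by simpa using (T.mu_phi_apply x ((T.phi x)⁻¹ y)).symm
  phi_phi _ _ _ := T.inv_phi_inv_phi

theorem dual_phi (x : V) : T.dual.phi x = (T.phi x)⁻¹ := rfl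

theorem adj_phi_phi_of_lt {x y : V} (h : y < x) :
    T.graph.Adj (T.phi x y) (T.phi y x) ∧
      T.phi (T.phi x y) x = T.phi y x ∧ T.phi (T.phi y x) y = T.phi x y := by
  have hyx : T.phi y x = x := T.phi_apply_eq_self_of_not_lt (lt_asymm h)
  have hlt : T.phi x y < x := T.phi_apply_lt_iff.2 h
  rw [hyx]
  exact ⟨T.adj_of_lt _ _ hlt, T.phi_apply_eq_self_of_not_lt (lt_asymm hlt), rfl⟩

theorem adj_phi_phi {x y : V} (h : T.graph.Adj x y) :
    T.graph.Adj (T.phi x y) (T.phi y x) ∧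
      T.phi (T.phi x y) x = T.phi y x ∧ T.phi (T.phi y x) y = T.phi x y := by
  by_cases hyx : y < x
  · exact T.adj_phi_phi_of_lt hyx
  by_cases hxy : x < y
  · obtain ⟨hadj, hx, hy⟩ := T.adj_phi_phi_of_lt hxy
    exact ⟨hadj.symm, hy, hx⟩
  rw [T.phi_apply_eq_self_of_not_lt hyx, T.phi_apply_eq_self_of_not_lt hxy]
  exact ⟨h.symm, rfl, T.phi_apply_eq_self_of_not_lt hyx⟩

theorem dual_dualRels_eq : T.dual.dualRels = T.rels := by
  unfold dualRels rels
  congr 1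
  ext r
  constructor
  · rintro ⟨a, b, hab, rfl⟩
    obtain ⟨hadj, ha, hb⟩ := T.dual.adj_phi_phi hab
    simp only [dual_phi, Equiv.Perm.inv_eq_iff_eq] at ha hb
    refine ⟨_, _, hadj, ?_⟩
    rw [dual_phi, dual_phi, ← ha, ← hb]
  · rintro ⟨x, y, hxy, rfl⟩
    obtain ⟨hadj, hx, hy⟩ := T.adj_phi_phi hxy
    refine ⟨_, _, hadj, ?_⟩
    rw [dual_phi, dual_phi, Equiv.Perm.inv_eq_iff_eq.2 hx.symm,
      Equiv.Perm.inv_eq_iff_eq.2 hy.symm]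

end TrickleGraph

/-- **Proposition 2.2.** The dual of a trickle graph `Γ` (same graph, same order, same labeling,
with each `φ_x` replaced by `φ_x⁻¹`) is again a trickle graph `Γ̃`, and the dual trickle group
of `Γ̃` is isomorphic to `Tr(Γ)` via the map sending each generator `x` to `x`. -/
theorem TrickleGraph.dual_dualTrickleGroup_iso {V : Type u} [PartialOrder V]
    (T : TrickleGraph V) :
    ∃ Td : TrickleGraph V,
      (Td.graph = T.graph ∧ Td.mu = T.mu ∧ ∀ x : V, Td.phi x = (T.phi x)⁻¹) ∧
      ∃ e : PresentedGroup Td.dualRels ≃* TrickleGroup T,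
        ∀ x : V, e (PresentedGroup.of x) = PresentedGroup.of x := by
  refine ⟨T.dual, ⟨rfl, rfl, fun _ => rfl⟩, ?_⟩
  rw [T.dual_dualRels_eq]
  exact ⟨MulEquiv.refl _, fun _ => rfl⟩
end

section
/- For n ≥ 2, the natural homomorphism ι_J : J_n → VJ_n from the cactus group to the virtual cactus group, sending x_{p,q} to x_{p,q} for all 1 ≤ p < q ≤ n, is injective. -/
/-- Indices of the cactus generators `x_{p,q}`, `1 ≤ p < q ≤ n`. -/
def JIdx (n : ℕ) : Type := {pq : ℕ × ℕ // 1 ≤ pq.1 ∧ pq.1 < pq.2 ∧ pq.2 ≤ n}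

/-- Indices of the symmetric-group generators `ρ_i`, `1 ≤ i ≤ n - 1`. -/
def RIdx (n : ℕ) : Type := {i : ℕ // 1 ≤ i ∧ i + 1 ≤ n}

/-- Generators of the virtual cactus group: the `x_{p,q}` and the `ρ_i`. -/
def VJGen (n : ℕ) : Type := JIdx n ⊕ RIdx n

/-- The generator `x_{p,q}` in the free group on the cactus generators (junk value `1` for
invalid indices). -/
def XJ (n p q : ℕ) : FreeGroup (JIdx n) :=
  if h : 1 ≤ p ∧ p < q ∧ q ≤ n then FreeGroup.of ⟨(p, q), h⟩ else 1

/-- The generator `x_{p,q}` in the free group on the virtual cactus generators. -/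
def XV (n p q : ℕ) : FreeGroup (VJGen n) :=
  if h : 1 ≤ p ∧ p < q ∧ q ≤ n then FreeGroup.of (Sum.inl ⟨(p, q), h⟩) else 1

/-- The generator `ρ_i` in the free group on the virtual cactus generators. -/
def RV (n i : ℕ) : FreeGroup (VJGen n) :=
  if h : 1 ≤ i ∧ i + 1 ≤ n then FreeGroup.of (Sum.inr ⟨i, h⟩) else 1

/-- The word `ρ_q ρ_{q-1} ⋯ ρ_p`. -/
def rhoDesc (n p q : ℕ) : FreeGroup (VJGen n) :=
  ((List.range' p (q + 1 - p)).reverse.map (RV n)).prod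

/-- The defining relators (j1)–(j3) of the cactus group `J_n`. -/
def JRels (n : ℕ) : Set (FreeGroup (JIdx n)) :=
  {r | ∃ p q : ℕ, (1 ≤ p ∧ p < q ∧ q ≤ n) ∧ r = XJ n p q ^ 2} ∪
  {r | ∃ p q m k : ℕ, (1 ≤ p ∧ p < q ∧ q ≤ n) ∧ (1 ≤ m ∧ m < k ∧ k ≤ n) ∧
      (q < m ∨ k < p) ∧ r = XJ n p q * XJ n m k * (XJ n m k * XJ n p q)⁻¹} ∪
  {r | ∃ p q m k : ℕ, (1 ≤ p ∧ p < q ∧ q ≤ n) ∧ (1 ≤ m ∧ m < k ∧ k ≤ n) ∧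
      (p ≤ m ∧ k ≤ q) ∧
      r = XJ n p q * XJ n m k * (XJ n (p + q - k) (p + q - m) * XJ n p q)⁻¹}

/-- The **cactus group** `J_n`. -/
abbrev JGroup (n : ℕ) : Type := PresentedGroup (JRels n)

/-- The defining relators (j1)–(j3), (s1)–(s3), (m1), (m2) of the virtual cactus group. -/
def VJRels (n : ℕ) : Set (FreeGroup (VJGen n)) :=
  {r | ∃ p q : ℕ, (1 ≤ p ∧ p < q ∧ q ≤ n) ∧ r = XV n p q ^ 2} ∪
  {r | ∃ p q m k : ℕ, (1 ≤ p ∧ p < q ∧ q ≤ n) ∧ (1 ≤ m ∧ m < k ∧ k ≤ n) ∧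
      (q < m ∨ k < p) ∧ r = XV n p q * XV n m k * (XV n m k * XV n p q)⁻¹} ∪
  {r | ∃ p q m k : ℕ, (1 ≤ p ∧ p < q ∧ q ≤ n) ∧ (1 ≤ m ∧ m < k ∧ k ≤ n) ∧
      (p ≤ m ∧ k ≤ q) ∧
      r = XV n p q * XV n m k * (XV n (p + q - k) (p + q - m) * XV n p q)⁻¹} ∪
  {r | ∃ i : ℕ, (1 ≤ i ∧ i + 1 ≤ n) ∧ r = RV n i ^ 2} ∪
  {r | ∃ i j : ℕ, (1 ≤ i ∧ i + 1 ≤ n) ∧ (1 ≤ j ∧ j + 1 ≤ n) ∧ (j = i + 1 ∨ i = j + 1) ∧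
      r = RV n i * RV n j * RV n i * (RV n j * RV n i * RV n j)⁻¹} ∪
  {r | ∃ i j : ℕ, (1 ≤ i ∧ i + 1 ≤ n) ∧ (1 ≤ j ∧ j + 1 ≤ n) ∧ (i + 1 < j ∨ j + 1 < i) ∧
      r = RV n i * RV n j * (RV n j * RV n i)⁻¹} ∪
  {r | ∃ i p q : ℕ, (1 ≤ i ∧ i + 1 ≤ n) ∧ (1 ≤ p ∧ p < q ∧ q ≤ n) ∧
      (i + 1 < p ∨ q + 1 ≤ i) ∧ r = RV n i * XV n p q * (XV n p q * RV n i)⁻¹} ∪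
  {r | ∃ p q : ℕ, (1 ≤ p ∧ p < q ∧ q < n) ∧
      r = XV n p q * rhoDesc n p q * (rhoDesc n p q * XV n (p + 1) (q + 1))⁻¹}

/-- The **virtual cactus group** `VJ_n`. -/
abbrev VJGroup (n : ℕ) : Type := PresentedGroup (VJRels n)

/-!
Let `W` be the right-angled Coxeter group generated by the subsets of `ℕ`, two generators commuting
when they are distinct and either disjoint or nested. The virtual cactus group acts on pairs
`(u, t)`, `u` a permutation of `ℕ` and `t ∈ W`: `ρ_i` replaces `u` by `s_i u`, and `x_{p,q}` sends
`(u, t)` to `(w u, x_{u⁻¹[p,q]} t)`, where `w` reverses the interval `[p,q]`. Elements of `W` are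
modelled by reduced words up to commutation; a generator acts on them by cancelling a copy of itself
that can be commuted to the front, and otherwise by being put in front.

A word in the cactus generators thus moves the base point `(1, 1)` through a sequence of labels
`u⁻¹[p,q]`. If the word acts trivially, its labels spell the identity of `W`, so up to commutations
two equal labels become adjacent. Each commutation of two labels is realised in `J_n` by (j2) or
(j3) applied to the corresponding letters, and two equal adjacent labels come from two equal
adjacent letters, which cancel by (j1). By induction on its length the word is trivial in `J_n`.
-/

open Relation

namespace RightAngledCoxeter

variable {α : Type*} (G : SimpleGraph α)

inductive Swap : List α → List α → Prop
  | swap {a b : α} (l : List α) : G.Adj a b → Swap (a :: b :: l) (b :: a :: l)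
  | cons (c : α) {l l' : List α} : Swap l l' → Swap (c :: l) (c :: l')

variable {G}

theorem Swap.symm {l l' : List α} (h : Swap G l l') : Swap G l' l := by
  induction h with
  | swap l h => exact .swap l h.symm
  | cons c _ ih => exact .cons c ih

theorem Swap.length_eq {l l' : List α} (h : Swap G l l') : l.length = l'.length := by
  induction h <;> simp_all

instance : Std.Symm (Swap G) := ⟨fun _ _ => Swap.symm⟩

variable (G) in
def Trace : Type _ := Quot (Swap G)

namespace Trace

variable (G) in
def mk (l : List α) : Trace G := Quot.mk _ l

def cons (a : α) : Trace G → Trace G := Quot.map (a :: ·) fun _ _ => Swap.cons a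

def length : Trace G → ℕ := Quot.lift List.length fun _ _ => Swap.length_eq

@[elab_as_elim, induction_eliminator]
protected theorem ind {motive : Trace G → Prop} (mk : ∀ l, motive (mk G l)) (t : Trace G) :
    motive t :=
  Quot.ind mk t

@[simp] theorem cons_mk (a : α) (l : List α) : cons a (mk G l) = mk G (a :: l) := rfl

@[simp] theorem length_mk (l : List α) : (mk G l).length = l.length := rfl

theorem mk_eq_mk_iff {l l' : List α} : mk G l = mk G l' ↔ ReflTransGen (Swap G) l l' := by
  rw [← EqvGen.eqvGen_eq_reflTransGen]
  exact ⟨Quot.eqvGen_exact, Quot.eqvGen_sound⟩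

theorem mk_eq_mk_of_swap {l l' : List α} (h : Swap G l l') : mk G l = mk G l' := Quot.sound h

theorem cons_cons {a b : α} (h : G.Adj a b) (t : Trace G) :
    cons a (cons b t) = cons b (cons a t) := by
  induction t with
  | mk l => exact mk_eq_mk_of_swap (.swap l h)

end Trace

open Trace

variable (G)

open scoped Classical in
noncomputable def cancel (a : α) : List α → Option (List α)
  | [] => none
  | b :: l => if b = a then some l else if G.Adj a b then (cancel a l).map (b :: ·) else none

noncomputable def cancelOrCons (a : α) (l : List α) : List α := (cancel G a l).getD (a :: l)

variable {G}

@[simp] theorem cancel_nil (a : α) : cancel G a [] = none := rfl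

@[simp] theorem cancel_cons_self (a : α) (l : List α) : cancel G a (a :: l) = some l := by
  simp [cancel]

theorem cancel_cons_of_adj {a b : α} (h : G.Adj a b) (l : List α) :
    cancel G a (b :: l) = (cancel G a l).map (b :: ·) := by
  simp [cancel, h, h.ne.symm]

theorem cancel_cons_of_not_adj {a b : α} (hab : b ≠ a) (h : ¬ G.Adj a b) (l : List α) :
    cancel G a (b :: l) = none := by
  simp [cancel, h, hab]

theorem mk_eq_cons_of_cancel_eq_some {a : α} {l m : List α} (h : cancel G a l = some m) :
    mk G l = mk G (a :: m) := by
  induction l generalizing m with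
  | nil => simp at h
  | cons b l ih =>
    by_cases hba : b = a
    · subst hba; simp_all
    by_cases hab : G.Adj a b
    · rw [cancel_cons_of_adj hab] at h
      obtain ⟨m', hm', rfl⟩ := Option.map_eq_some_iff.mp h
      rw [← cons_mk, ih hm', cons_mk]
      exact mk_eq_mk_of_swap (.swap m' hab.symm)
    · simp [cancel_cons_of_not_adj hba hab] at h

theorem map_mk_cancel_of_swap (a : α) {l l' : List α} (h : Swap G l l') :
    (cancel G a l).map (mk G) = (cancel G a l').map (mk G) := by
  induction h with
  | @swap c d l hcd =>
    by_cases hca : c = a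
    · subst hca; simp [cancel_cons_of_adj hcd]
    by_cases hda : d = a
    · subst hda; simp [cancel_cons_of_adj hcd.symm]
    simp only [cancel, hca, hda, if_false]
    split_ifs <;> simp [Option.map_map, Function.comp_def, ← cons_mk, cons_cons hcd]
  | @cons c l l' _ ih =>
    by_cases hca : c = a
    · subst hca; simpa using mk_eq_mk_of_swap ‹_›
    by_cases hac : G.Adj a c
    · have hc : mk G ∘ (c :: ·) = cons c ∘ mk G := rfl
      simp only [cancel_cons_of_adj hac, Option.map_map, hc]
      rw [← Option.map_map, ih, Option.map_map]
    · simp [cancel_cons_of_not_adj hca hac]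

theorem mk_cancelOrCons_of_swap (a : α) {l l' : List α} (h : Swap G l l') :
    mk G (cancelOrCons G a l) = mk G (cancelOrCons G a l') := by
  have hmap := map_mk_cancel_of_swap a h
  unfold cancelOrCons
  cases hl : cancel G a l <;> cases hl' : cancel G a l' <;> simp_all
  exact mk_eq_mk_of_swap (.cons a h)

namespace Trace

variable (G) in
noncomputable def leftMul (a : α) : Trace G → Trace G :=
  Quot.lift (fun l => mk G (cancelOrCons G a l)) fun _ _ => mk_cancelOrCons_of_swap a

theorem leftMul_mk (a : α) (l : List α) :
    leftMul G a (mk G l) = mk G (cancelOrCons G a l) := rfl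

@[simp] theorem leftMul_cons_self (a : α) (t : Trace G) : leftMul G a (cons a t) = t := by
  induction t with
  | mk l => simp [leftMul_mk, cancelOrCons]

theorem leftMul_cons_of_adj {a b : α} (h : G.Adj a b) (t : Trace G) :
    leftMul G a (cons b t) = cons b (leftMul G a t) := by
  induction t with
  | mk l =>
    simp only [cons_mk, leftMul_mk, cancelOrCons, cancel_cons_of_adj h]
    cases cancel G a l
    · exact mk_eq_mk_of_swap (.swap l h)
    · rfl

theorem leftMul_eq_cons_or (a : α) (t : Trace G) :
    leftMul G a t = cons a t ∨ t = cons a (leftMul G a t) := by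
  induction t with
  | mk l =>
    simp only [leftMul_mk, cancelOrCons]
    cases h : cancel G a l
    · exact .inl rfl
    · exact .inr (mk_eq_cons_of_cancel_eq_some h)

theorem leftMul_comm {a b : α} (h : G.Adj a b) (t : Trace G) :
    leftMul G a (leftMul G b t) = leftMul G b (leftMul G a t) := by
  rcases leftMul_eq_cons_or b t with hb | hb
  · rcases leftMul_eq_cons_or a t with ha | ha
    · rw [hb, ha, leftMul_cons_of_adj h, leftMul_cons_of_adj h.symm, ha, hb, cons_cons h]
    · rw [ha, leftMul_cons_self, leftMul_cons_of_adj h.symm, leftMul_cons_self]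
  · rw [hb, leftMul_cons_self, leftMul_cons_of_adj h, leftMul_cons_self]

theorem foldr_leftMul_eq_mk_or_exists_pair (L : List α) :
    L.foldr (leftMul G) (mk G []) = mk G L ∨ ∃ x a y, mk G L = mk G (x ++ a :: a :: y) := by
  induction L with
  | nil => exact .inl rfl
  | cons a L ih =>
    rcases ih with ih | ⟨x, b, y, ih⟩
    · rw [List.foldr_cons, ih]
      rcases leftMul_eq_cons_or a (mk G L) with h | h
      · exact .inl h
      · obtain ⟨m, hm⟩ := Quot.exists_rep (leftMul G a (mk G L))
        refine .inr ⟨[], a, m, ?_⟩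
        rw [← cons_mk, h, ← hm]
        rfl
    · exact .inr ⟨a :: x, b, y, by rw [← cons_mk, ih]; rfl⟩

end Trace

variable (G) in
def IsReduced : List α → Prop
  | [] => True
  | a :: l => cancel G a l = none ∧ IsReduced l

theorem IsReduced.cancel_eq_none {a : α} {l m : List α} (hl : IsReduced G l)
    (h : cancel G a l = some m) : cancel G a m = none := by
  induction l generalizing m with
  | nil => simp at h
  | cons b l ih =>
    by_cases hba : b = a
    · subst hba; simp_all [IsReduced]
    by_cases hab : G.Adj a b
    · rw [cancel_cons_of_adj hab] at h
      obtain ⟨m', hm', rfl⟩ := Option.map_eq_some_iff.mp h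
      simp [cancel_cons_of_adj hab, ih hl.2 hm']
    · simp [cancel_cons_of_not_adj hba hab] at h

theorem cancel_eq_none_of_cancel_eq_some {a b : α} (hab : G.Adj a b) {l m : List α}
    (ha : cancel G a l = some m) (hb : cancel G b l = none) : cancel G b m = none := by
  induction l generalizing m with
  | nil => simp at ha
  | cons c l ih =>
    by_cases hca : c = a
    · subst hca
      simp_all [cancel_cons_of_adj hab.symm]
    by_cases hac : G.Adj a c
    · rw [cancel_cons_of_adj hac] at ha
      obtain ⟨m', hm', rfl⟩ := Option.map_eq_some_iff.mp ha
      by_cases hcb : c = b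
      · simp [hcb] at hb
      by_cases hbc : G.Adj b c
      · simp_all [cancel_cons_of_adj hbc]
      · exact cancel_cons_of_not_adj hcb hbc m'
    · simp [cancel_cons_of_not_adj hca hac] at ha

theorem IsReduced.of_cancel_eq_some {a : α} {l m : List α} (hl : IsReduced G l)
    (h : cancel G a l = some m) : IsReduced G m := by
  induction l generalizing m with
  | nil => simp at h
  | cons b l ih =>
    by_cases hba : b = a
    · subst hba; simp_all [IsReduced]
    by_cases hab : G.Adj a b
    · rw [cancel_cons_of_adj hab] at h
      obtain ⟨m', hm', rfl⟩ := Option.map_eq_some_iff.mp h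
      exact ⟨cancel_eq_none_of_cancel_eq_some hab hm' hl.1, ih hl.2 hm'⟩
    · simp [cancel_cons_of_not_adj hba hab] at h

theorem IsReduced.cancelOrCons {l : List α} (hl : IsReduced G l) (a : α) :
    IsReduced G (cancelOrCons G a l) := by
  unfold RightAngledCoxeter.cancelOrCons
  cases h : cancel G a l with
  | none => exact ⟨h, hl⟩
  | some m => exact hl.of_cancel_eq_some h

theorem IsReduced.leftMul_leftMul_mk {l : List α} (hl : IsReduced G l) (a : α) :
    Trace.leftMul G a (Trace.leftMul G a (mk G l)) = mk G l := by
  simp only [Trace.leftMul_mk, RightAngledCoxeter.cancelOrCons]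
  cases h : cancel G a l with
  | none => simp
  | some m => simp [hl.cancel_eq_none h, mk_eq_cons_of_cancel_eq_some h]

variable (G) in
/-- The right-angled Coxeter group of `G`, as its reduced words up to commutation. -/
def ReducedTrace : Type _ := {t : Trace G // ∃ l, IsReduced G l ∧ mk G l = t}

namespace ReducedTrace

variable (G) in
def nil : ReducedTrace G := ⟨mk G [], [], trivial, rfl⟩

noncomputable def leftMul (a : α) (t : ReducedTrace G) : ReducedTrace G :=
  ⟨Trace.leftMul G a t.1, by
    obtain ⟨l, hl, hlt⟩ := t.2
    exact ⟨_, hl.cancelOrCons a, by rw [← hlt, Trace.leftMul_mk]⟩⟩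

theorem leftMul_involutive (a : α) : Function.Involutive (leftMul (G := G) a) := by
  rintro ⟨_, l, hl, rfl⟩
  exact Subtype.ext (hl.leftMul_leftMul_mk a)

end ReducedTrace

variable (G) in
noncomputable def gen (a : α) : Equiv.Perm (ReducedTrace G) :=
  (ReducedTrace.leftMul_involutive a).toPerm

@[simp] theorem coe_gen_apply (a : α) (t : ReducedTrace G) :
    (gen G a t).1 = Trace.leftMul G a t.1 := rfl

@[simp] theorem gen_gen (a : α) (t : ReducedTrace G) : gen G a (gen G a t) = t :=
  ReducedTrace.leftMul_involutive a t

theorem commute_gen {a b : α} (h : G.Adj a b) : Commute (gen G a) (gen G b) :=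
  Equiv.ext fun t => Subtype.ext (Trace.leftMul_comm h t.1)

end RightAngledCoxeter

def laminarGraph (β : Type*) : SimpleGraph (Set β) :=
  SimpleGraph.fromRel fun A B => Disjoint A B ∨ A ⊆ B

theorem laminarGraph_adj_iff {β : Type*} {A B : Set β} :
    (laminarGraph β).Adj A B ↔ A ≠ B ∧ (Disjoint A B ∨ A ⊆ B ∨ B ⊆ A) := by
  simp only [laminarGraph, SimpleGraph.fromRel_adj, disjoint_comm (a := B)]
  tauto

theorem laminarGraph_adj_preimage {β γ : Type*} (e : β ≃ γ) {A B : Set γ} :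
    (laminarGraph β).Adj (e ⁻¹' A) (e ⁻¹' B) ↔ (laminarGraph γ).Adj A B := by
  have hrange : ∀ S : Set γ, S ⊆ Set.range e := fun S => by simp [e.surjective.range_eq]
  simp only [laminarGraph_adj_iff, (Set.preimage_injective.mpr e.surjective).ne_iff,
    Set.disjoint_preimage_iff e.surjective, Set.preimage_subset_preimage_iff (hrange _)]

open RightAngledCoxeter in
theorem commute_gen_laminar {β : Type*} {A B : Set β} (h : Disjoint A B ∨ A ⊆ B ∨ B ⊆ A) :
    Commute (gen (laminarGraph β) A) (gen (laminarGraph β) B) := by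
  by_cases hAB : A = B
  · rw [hAB]
  · exact commute_gen (laminarGraph_adj_iff.mpr ⟨hAB, h⟩)

theorem Set.Icc_disjoint_Icc_iff {α : Type*} [LinearOrder α] {a b c d : α} (hab : a ≤ b)
    (hcd : c ≤ d) : Disjoint (Set.Icc a b) (Set.Icc c d) ↔ b < c ∨ d < a := by
  rw [Set.disjoint_left]
  constructor
  · intro h
    by_contra! h'
    exact h (a := max a c) ⟨le_max_left _ _, max_le hab h'.1⟩
      ⟨le_max_right _ _, max_le h'.2 hcd⟩
  · rintro (h | h) x ⟨h₁, h₂⟩ ⟨h₃, h₄⟩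
    exacts [(h₂.trans_lt h).not_ge h₃, (h₄.trans_lt h).not_ge h₁]

def revIcc (p q : ℕ) : Equiv.Perm ℕ :=
  Function.Involutive.toPerm (fun x => if p ≤ x ∧ x ≤ q then p + q - x else x) fun x => by
    dsimp only
    split_ifs <;> omega

theorem revIcc_apply (p q x : ℕ) :
    revIcc p q x = if p ≤ x ∧ x ≤ q then p + q - x else x := rfl

theorem revIcc_mul_self (p q : ℕ) : revIcc p q * revIcc p q = 1 := by
  ext x
  simp only [Equiv.Perm.mul_apply, revIcc_apply, Equiv.Perm.one_apply]
  split_ifs <;> omega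

theorem revIcc_preimage_revIcc_preimage (p q : ℕ) (S : Set ℕ) :
    revIcc p q ⁻¹' (revIcc p q ⁻¹' S) = S := by
  rw [← Set.preimage_comp, ← Equiv.Perm.coe_mul, revIcc_mul_self, Equiv.Perm.coe_one,
    Set.preimage_id]

theorem revIcc_commute {p q m k : ℕ} (h : q < m ∨ k < p) :
    Commute (revIcc p q) (revIcc m k) := by
  ext x
  simp only [Equiv.Perm.mul_apply, revIcc_apply]
  split_ifs <;> omega

theorem revIcc_mul_revIcc_of_le {p q m k : ℕ} (hpm : p ≤ m) (hmk : m ≤ k) (hkq : k ≤ q) :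
    revIcc p q * revIcc m k = revIcc (p + q - k) (p + q - m) * revIcc p q := by
  ext x
  simp only [Equiv.Perm.mul_apply, revIcc_apply]
  split_ifs <;> omega

theorem revIcc_braid (i : ℕ) :
    revIcc i (i + 1) * revIcc (i + 1) (i + 2) * revIcc i (i + 1) =
      revIcc (i + 1) (i + 2) * revIcc i (i + 1) * revIcc (i + 1) (i + 2) := by
  ext x
  simp only [Equiv.Perm.mul_apply, revIcc_apply]
  split_ifs <;> omega

theorem revIcc_preimage_Icc_of_le {p q m k : ℕ} (hpm : p ≤ m) (hmk : m ≤ k) (hkq : k ≤ q) :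
    revIcc p q ⁻¹' Set.Icc m k = Set.Icc (p + q - k) (p + q - m) := by
  ext x
  simp only [Set.mem_preimage, Set.mem_Icc, revIcc_apply]
  split_ifs <;> omega

theorem revIcc_preimage_Icc_self (p q : ℕ) : revIcc p q ⁻¹' Set.Icc p q = Set.Icc p q := by
  ext x
  simp only [Set.mem_preimage, Set.mem_Icc, revIcc_apply]
  split_ifs <;> omega

theorem revIcc_preimage_Icc_of_disjoint {p q m k : ℕ} (h : q < m ∨ k < p) :
    revIcc p q ⁻¹' Set.Icc m k = Set.Icc m k := by
  ext x
  simp only [Set.mem_preimage, Set.mem_Icc, revIcc_apply]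
  split_ifs <;> omega

theorem revIcc_preimage_Icc_of_ge {p q m k : ℕ} (hmp : m ≤ p) (hqk : q ≤ k) :
    revIcc p q ⁻¹' Set.Icc m k = Set.Icc m k := by
  ext x
  simp only [Set.mem_preimage, Set.mem_Icc, revIcc_apply]
  split_ifs <;> omega

def descPerm (p q : ℕ) : Equiv.Perm ℕ :=
  ((List.range' p (q + 1 - p)).reverse.map fun i => revIcc i (i + 1)).prod

theorem descPerm_succ {p q : ℕ} (hpq : p ≤ q + 1) :
    descPerm p (q + 1) = revIcc (q + 1) (q + 2) * descPerm p q := by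
  rw [descPerm, show q + 1 + 1 - p = (q + 1 - p) + 1 by omega, List.range'_concat]
  simp [descPerm, show p + (q + 1 - p) = q + 1 by omega]

theorem descPerm_apply {p q : ℕ} (hpq : p ≤ q) (x : ℕ) :
    descPerm p q x = if p < x ∧ x ≤ q + 1 then x - 1 else if x = p then q + 1 else x := by
  induction q, hpq using Nat.le_induction generalizing x with
  | base =>
    simp only [descPerm, Nat.add_sub_cancel_left, List.range'_one, List.reverse_singleton,
      List.map_singleton, List.prod_singleton, revIcc_apply]
    split_ifs <;> omega
  | succ q hpq ih =>
    rw [descPerm_succ (by omega), Equiv.Perm.mul_apply, ih, revIcc_apply]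
    split_ifs <;> omega

theorem revIcc_mul_descPerm {p q : ℕ} (hpq : p ≤ q) :
    revIcc p q * descPerm p q = descPerm p q * revIcc (p + 1) (q + 1) := by
  ext x
  simp only [Equiv.Perm.mul_apply, revIcc_apply, descPerm_apply hpq]
  split_ifs <;> omega

theorem descPerm_preimage_Icc {p q : ℕ} (hpq : p ≤ q) :
    descPerm p q ⁻¹' Set.Icc p q = Set.Icc (p + 1) (q + 1) := by
  ext x
  simp only [Set.mem_preimage, Set.mem_Icc, descPerm_apply hpq]
  split_ifs <;> omega

open RightAngledCoxeter

abbrev CactusState : Type := Equiv.Perm ℕ × ReducedTrace (laminarGraph ℕ)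

namespace CactusState

def init : CactusState := (1, ReducedTrace.nil _)

def permAct : Equiv.Perm ℕ →* Equiv.Perm CactusState :=
  MonoidHom.mk' (fun σ => (Equiv.mulLeft σ).prodCongr (Equiv.refl _)) fun σ τ => by
    ext s <;> simp [mul_assoc]

@[simp] theorem permAct_apply (σ : Equiv.Perm ℕ) (s : CactusState) :
    permAct σ s = (σ * s.1, s.2) := rfl

noncomputable def xAct (p q : ℕ) : Equiv.Perm CactusState :=
  Function.Involutive.toPerm
    (fun s => (revIcc p q * s.1, gen _ (s.1 ⁻¹' Set.Icc p q) s.2)) fun ⟨u, t⟩ => by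
      simp [← mul_assoc, revIcc_mul_self, Set.preimage_comp, revIcc_preimage_Icc_self]

@[simp] theorem xAct_apply (p q : ℕ) (s : CactusState) :
    xAct p q s = (revIcc p q * s.1, gen _ (s.1 ⁻¹' Set.Icc p q) s.2) := rfl

theorem xAct_mul_self (p q : ℕ) : xAct p q * xAct p q = 1 :=
  Equiv.ext (Function.Involutive.toPerm_involutive _)

theorem xAct_mul_xAct {p q m k m' k' : ℕ}
    (hrev : revIcc p q * revIcc m k = revIcc m' k' * revIcc p q)
    (hpq : revIcc m k ⁻¹' Set.Icc p q = Set.Icc p q)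
    (hmk : revIcc p q ⁻¹' Set.Icc m' k' = Set.Icc m k)
    (hlam : Disjoint (Set.Icc p q) (Set.Icc m k) ∨ Set.Icc m k ⊆ Set.Icc p q) :
    xAct p q * xAct m k = xAct m' k' * xAct p q := by
  ext1 ⟨u, t⟩
  simp only [Equiv.Perm.mul_apply, xAct_apply, ← mul_assoc, hrev, Equiv.Perm.coe_mul,
    Set.preimage_comp, hpq, hmk, Prod.mk.injEq, true_and]
  refine Equiv.congr_fun (commute_gen_laminar ?_).eq t
  rcases hlam with h | h
  exacts [.inl (h.preimage u), .inr (.inr (Set.preimage_mono h))]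

theorem xAct_commute {p q m k : ℕ} (h : q < m ∨ k < p) : Commute (xAct p q) (xAct m k) :=
  xAct_mul_xAct (revIcc_commute h).eq (revIcc_preimage_Icc_of_disjoint h.symm)
    (revIcc_preimage_Icc_of_disjoint h)
    (.inl (Set.disjoint_left.mpr fun x h₁ h₂ => by simp only [Set.mem_Icc] at h₁ h₂; omega))

theorem xAct_mul_xAct_of_le {p q m k : ℕ} (hpm : p ≤ m) (hmk : m ≤ k) (hkq : k ≤ q) :
    xAct p q * xAct m k = xAct (p + q - k) (p + q - m) * xAct p q := by
  refine xAct_mul_xAct (revIcc_mul_revIcc_of_le hpm hmk hkq) (revIcc_preimage_Icc_of_ge hpm hkq)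
    ?_ (.inr (Set.Icc_subset_Icc hpm hkq))
  rw [revIcc_preimage_Icc_of_le (by omega) (by omega) (by omega)]
  congr 1 <;> omega

theorem xAct_mul_permAct {p q p' q' : ℕ} {σ : Equiv.Perm ℕ}
    (hrev : revIcc p q * σ = σ * revIcc p' q') (hσ : σ ⁻¹' Set.Icc p q = Set.Icc p' q') :
    xAct p q * permAct σ = permAct σ * xAct p' q' := by
  ext1 ⟨u, t⟩
  simp [← mul_assoc, hrev, Set.preimage_comp, hσ]

variable {n : ℕ}

noncomputable def vjGen (n : ℕ) : VJGen n → Equiv.Perm CactusState :=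
  Sum.elim (fun a => xAct a.1.1 a.1.2) fun i => permAct (revIcc i.1 (i.1 + 1))

theorem lift_XV {p q : ℕ} (h : 1 ≤ p ∧ p < q ∧ q ≤ n) :
    FreeGroup.lift (vjGen n) (XV n p q) = xAct p q := by
  rw [XV, dif_pos h]
  exact FreeGroup.lift_apply_of

theorem lift_RV {i : ℕ} (h : 1 ≤ i ∧ i + 1 ≤ n) :
    FreeGroup.lift (vjGen n) (RV n i) = permAct (revIcc i (i + 1)) := by
  rw [RV, dif_pos h]
  exact FreeGroup.lift_apply_of

theorem lift_rhoDesc {p q : ℕ} (hp : 1 ≤ p) (hq : q < n) :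
    FreeGroup.lift (vjGen n) (rhoDesc n p q) = permAct (descPerm p q) := by
  rw [rhoDesc, descPerm, map_list_prod, map_list_prod, List.map_map, List.map_map]
  congr 1
  refine List.map_congr_left fun i hi => ?_
  rw [List.mem_reverse, List.mem_range'_1] at hi
  exact lift_RV (by omega)

theorem vjGen_rels (n : ℕ) : ∀ r ∈ VJRels n, FreeGroup.lift (vjGen n) r = 1 := by
  rintro r (((((((⟨p, q, h, rfl⟩ | ⟨p, q, m, k, h, h', hd, rfl⟩) |
    ⟨p, q, m, k, h, h', hs, rfl⟩) | ⟨i, h, rfl⟩) | ⟨i, j, h, h', hij, rfl⟩) |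
    ⟨i, j, h, h', hij, rfl⟩) | ⟨i, p, q, h, h', hip, rfl⟩) | ⟨p, q, h, rfl⟩)
  · rw [map_pow, lift_XV h, sq, xAct_mul_self]
  · simp only [map_mul, map_inv, lift_XV h, lift_XV h', mul_inv_eq_one]
    exact (xAct_commute hd).eq
  · have h'' : 1 ≤ p + q - k ∧ p + q - k < p + q - m ∧ p + q - m ≤ n := by omega
    simp only [map_mul, map_inv, lift_XV h, lift_XV h', lift_XV h'', mul_inv_eq_one]
    exact xAct_mul_xAct_of_le hs.1 h'.2.1.le hs.2
  · rw [map_pow, lift_RV h, ← map_pow, sq, revIcc_mul_self, map_one]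
  · simp only [map_mul, map_inv, lift_RV h, lift_RV h', mul_inv_eq_one]
    simp only [← map_mul]
    rcases hij with rfl | rfl <;> rw [revIcc_braid]
  · simp only [map_mul, map_inv, lift_RV h, lift_RV h', mul_inv_eq_one]
    simp only [← map_mul]
    rw [(revIcc_commute (by omega)).eq]
  · simp only [map_mul, map_inv, lift_RV h, lift_XV h', mul_inv_eq_one]
    exact (xAct_mul_permAct (revIcc_commute (by omega)).eq.symm
      (revIcc_preimage_Icc_of_disjoint (by omega))).symm
  · have h' : 1 ≤ p + 1 ∧ p + 1 < q + 1 ∧ q + 1 ≤ n := by omega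
    simp only [map_mul, map_inv, lift_XV ⟨h.1, h.2.1, h.2.2.le⟩, lift_XV h',
      lift_rhoDesc h.1 h.2.2, mul_inv_eq_one]
    exact xAct_mul_permAct (revIcc_mul_descPerm h.2.1.le) (descPerm_preimage_Icc h.2.1.le)

noncomputable def vjAction (n : ℕ) : VJGroup n →* Equiv.Perm CactusState :=
  PresentedGroup.toGroup (vjGen_rels n)

end CactusState

namespace JIdx

variable {n : ℕ}

def interval (a : JIdx n) : Set ℕ := Set.Icc a.1.1 a.1.2

def rev (a : JIdx n) : Equiv.Perm ℕ := revIcc a.1.1 a.1.2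

theorem interval_injective : Function.Injective (interval (n := n)) := by
  rintro ⟨⟨p, q⟩, h⟩ ⟨⟨m, k⟩, h'⟩ hI
  obtain ⟨rfl, rfl⟩ := (Set.Icc_eq_Icc_iff h.2.1.le).mp hI
  rfl

theorem rev_preimage_interval_self (a : JIdx n) : a.rev ⁻¹' a.interval = a.interval :=
  revIcc_preimage_Icc_self _ _

theorem rev_preimage_rev_preimage (a : JIdx n) (S : Set ℕ) : a.rev ⁻¹' (a.rev ⁻¹' S) = S :=
  revIcc_preimage_revIcc_preimage _ _ _

theorem rev_preimage_interval {a b : JIdx n}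
    (h : Disjoint a.interval b.interval ∨ a.interval ⊆ b.interval) :
    a.rev ⁻¹' b.interval = b.interval := by
  obtain ⟨⟨p, q⟩, ha⟩ := a
  obtain ⟨⟨m, k⟩, hb⟩ := b
  dsimp only [JIdx.interval, JIdx.rev] at h ⊢
  rcases h with h | h
  · exact revIcc_preimage_Icc_of_disjoint ((Set.Icc_disjoint_Icc_iff ha.2.1.le hb.2.1.le).mp h)
  · obtain ⟨hmp, hqk⟩ := (Set.Icc_subset_Icc_iff ha.2.1.le).mp h
    exact revIcc_preimage_Icc_of_ge hmp hqk

end JIdx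

namespace JGroup

variable {n : ℕ}

open PresentedGroup

theorem mk_XJ {p q : ℕ} (h : 1 ≤ p ∧ p < q ∧ q ≤ n) :
    PresentedGroup.mk (JRels n) (XJ n p q) = of ⟨(p, q), h⟩ := by
  rw [XJ, dif_pos h]
  rfl

theorem of_mul_self (a : JIdx n) : (of a : JGroup n) * of a = 1 := by
  obtain ⟨⟨p, q⟩, h⟩ := a
  have := one_of_mem (rels := JRels n) (.inl (.inl ⟨p, q, h, rfl⟩))
  rwa [map_pow, mk_XJ h, sq] at this

theorem exists_of_mul_of {a b : JIdx n}
    (h : Disjoint a.interval b.interval ∨ b.interval ⊆ a.interval) :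
    ∃ c : JIdx n, c.interval = a.rev ⁻¹' b.interval ∧
      (of a : JGroup n) * of b = of c * of a := by
  obtain ⟨⟨p, q⟩, ha⟩ := a
  obtain ⟨⟨m, k⟩, hb⟩ := b
  dsimp only [JIdx.interval, JIdx.rev] at h ⊢
  rcases h with h | h
  · have hd := (Set.Icc_disjoint_Icc_iff ha.2.1.le hb.2.1.le).mp h
    refine ⟨⟨(m, k), hb⟩, (revIcc_preimage_Icc_of_disjoint hd).symm, ?_⟩
    have := one_of_mem (rels := JRels n) (.inl (.inr ⟨p, q, m, k, ha, hb, hd, rfl⟩))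
    rwa [map_mul, map_mul, map_inv, map_mul, mk_XJ ha, mk_XJ hb, mul_inv_eq_one] at this
  · obtain ⟨hpm, hkq⟩ := (Set.Icc_subset_Icc_iff hb.2.1.le).mp h
    have hc : 1 ≤ p + q - k ∧ p + q - k < p + q - m ∧ p + q - m ≤ n := by omega
    refine ⟨⟨(p + q - k, p + q - m), hc⟩,
      (revIcc_preimage_Icc_of_le hpm hb.2.1.le hkq).symm, ?_⟩
    have := one_of_mem (rels := JRels n) (.inr ⟨p, q, m, k, ha, hb, ⟨hpm, hkq⟩, rfl⟩)
    rwa [map_mul, map_mul, map_inv, map_mul, mk_XJ ha, mk_XJ hb, mk_XJ hc, mul_inv_eq_one] at this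

theorem exists_swap {a b : JIdx n}
    (h : (laminarGraph ℕ).Adj (b.rev ⁻¹' a.interval) b.interval) :
    ∃ a' b' : JIdx n, (of a : JGroup n) * of b = of a' * of b' ∧
      b'.rev ⁻¹' a'.interval = b.interval ∧ b'.interval = b.rev ⁻¹' a.interval := by
  rw [← b.rev_preimage_interval_self, laminarGraph_adj_preimage, laminarGraph_adj_iff] at h
  obtain hab | hba := or_assoc.mpr h.2
  · obtain ⟨c, hc, hbac⟩ := exists_of_mul_of (a := b) (b := a) (hab.imp_left (·.symm))
    refine ⟨b, c, ?_, JIdx.rev_preimage_interval ?_, hc⟩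
    · calc of a * of b = of b * (of b * of a) * of b := by simp [← mul_assoc, of_mul_self]
        _ = of b * of c := by rw [hbac, mul_assoc, mul_assoc, of_mul_self, mul_one]
    · rw [hc, ← b.rev_preimage_interval_self]
      exact hab.imp (Disjoint.preimage _) (Set.preimage_mono ·)
  · obtain ⟨c, hc, habc⟩ := exists_of_mul_of (.inr hba)
    refine ⟨c, a, habc, ?_, (JIdx.rev_preimage_interval (.inr hba)).symm⟩
    rw [hc, a.rev_preimage_rev_preimage]

theorem map_inl_XJ (n p q : ℕ) :
    FreeGroup.map (Sum.inl : JIdx n → VJGen n) (XJ n p q) = XV n p q := by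
  unfold XJ XV
  split_ifs
  · exact FreeGroup.map.of
  · exact map_one _

theorem map_inl_mem_VJRels {r : FreeGroup (JIdx n)} (hr : r ∈ JRels n) :
    FreeGroup.map (Sum.inl : JIdx n → VJGen n) r ∈ VJRels n := by
  rcases hr with (⟨p, q, h, rfl⟩ | ⟨p, q, m, k, h, h', hd, rfl⟩) |
    ⟨p, q, m, k, h, h', hs, rfl⟩
  · exact .inl <| .inl <| .inl <| .inl <| .inl <| .inl <| .inl
      ⟨p, q, h, by rw [map_pow, map_inl_XJ]; rfl⟩
  · exact .inl <| .inl <| .inl <| .inl <| .inl <| .inl <| .inr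
      ⟨p, q, m, k, h, h', hd, by simp only [map_mul, map_inv, map_inl_XJ]; rfl⟩
  · exact .inl <| .inl <| .inl <| .inl <| .inl <| .inr
      ⟨p, q, m, k, h, h', hs, by simp only [map_mul, map_inv, map_inl_XJ]; rfl⟩

theorem iota_rels (n : ℕ) : ∀ r ∈ JRels n,
    FreeGroup.lift (fun a : JIdx n => (of (Sum.inl a) : VJGroup n)) r = 1 := fun r hr => by
  have hlift : FreeGroup.lift (fun a : JIdx n => (of (Sum.inl a) : VJGroup n)) =
      (PresentedGroup.mk (VJRels n)).comp (FreeGroup.map (Sum.inl : JIdx n → VJGen n)) := by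
    ext
    rfl
  rw [hlift, MonoidHom.comp_apply]
  exact one_of_mem (map_inl_mem_VJRels hr)

noncomputable def iota (n : ℕ) : JGroup n →* VJGroup n := toGroup (iota_rels n)

noncomputable def state (g : JGroup n) : CactusState :=
  CactusState.vjAction n (iota n g) CactusState.init

theorem state_of_mul (a : JIdx n) (g : JGroup n) :
    state (of a * g) = CactusState.xAct a.1.1 a.1.2 (state g) := by
  simp only [state, map_mul, Equiv.Perm.mul_apply, iota, toGroup.of]
  rfl

theorem state_fst_of_mul (a : JIdx n) (g : JGroup n) :
    (state (of a * g)).1 = a.rev * (state g).1 := by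
  rw [state_of_mul]
  rfl

def word (l : List (JIdx n)) : JGroup n := (l.map of).prod

@[simp] theorem word_cons (a : JIdx n) (l : List (JIdx n)) : word (a :: l) = of a * word l := rfl

theorem word_reverse (l : List (JIdx n)) : word l.reverse = (word l)⁻¹ := by
  simp only [word, List.prod_inv_reverse, List.map_reverse, List.map_map]
  congr 2
  exact List.map_congr_left fun a _ => (inv_eq_of_mul_eq_one_right (of_mul_self a)).symm

theorem exists_word (g : JGroup n) : ∃ l, word l = g := by
  have hg : g ∈ Subgroup.closure (Set.range of) := by simp
  induction hg using Subgroup.closure_induction with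
  | mem _ h => obtain ⟨a, rfl⟩ := h; exact ⟨[a], mul_one _⟩
  | one => exact ⟨[], rfl⟩
  | mul _ _ _ _ h₁ h₂ =>
    obtain ⟨l₁, rfl⟩ := h₁
    obtain ⟨l₂, rfl⟩ := h₂
    exact ⟨l₁ ++ l₂, by simp [word]⟩
  | inv _ _ h => obtain ⟨l, rfl⟩ := h; exact ⟨l.reverse, word_reverse l⟩

noncomputable def labels : List (JIdx n) → List (Set ℕ)
  | [] => []
  | a :: l => (state (word l)).1 ⁻¹' a.interval :: labels l

@[simp] theorem length_labels (l : List (JIdx n)) : (labels l).length = l.length := by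
  induction l <;> simp_all [labels]

theorem state_word (l : List (JIdx n)) :
    (state (word l)).2.1 = (labels l).foldr (Trace.leftMul _) (Trace.mk _ []) := by
  induction l with
  | nil => rfl
  | cons a l ih => simp [state_of_mul, labels, ih, JIdx.interval]

theorem exists_word_of_swap {L L' : List (Set ℕ)} (h : Swap (laminarGraph ℕ) L L') :
    ∀ l : List (JIdx n), labels l = L → ∃ l', word l' = word l ∧ labels l' = L' := by
  induction h with
  | @swap A B L hAB =>
    rintro (_ | ⟨a, _ | ⟨b, l⟩⟩) hl <;>
      simp only [labels, List.cons.injEq, reduceCtorEq, and_false] at hl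
    obtain ⟨rfl, rfl, rfl⟩ := hl
    simp only [word_cons, state_fst_of_mul, Equiv.Perm.coe_mul, Set.preimage_comp,
      laminarGraph_adj_preimage] at hAB
    obtain ⟨a', b', hw, h₁, h₂⟩ := exists_swap hAB
    refine ⟨a' :: b' :: l, by simp [← mul_assoc, hw], ?_⟩
    simp [labels, state_fst_of_mul, Set.preimage_comp, h₁, h₂]
  | cons C _ ih =>
    rintro (_ | ⟨a, l⟩) hl <;> simp only [labels, List.cons.injEq, reduceCtorEq] at hl
    obtain ⟨rfl, hl⟩ := hl
    obtain ⟨l', hw, rfl⟩ := ih l hl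
    exact ⟨a :: l', by simp [hw], by simp [labels, hw]⟩

theorem exists_word_of_mk_eq {l : List (JIdx n)} {L : List (Set ℕ)}
    (h : Trace.mk (laminarGraph ℕ) (labels l) = Trace.mk _ L) :
    ∃ l', word l' = word l ∧ labels l' = L := by
  replace h := Trace.mk_eq_mk_iff.mp h
  induction h with
  | refl => exact ⟨l, rfl, rfl⟩
  | tail _ hs ih =>
    obtain ⟨l', hw, hl'⟩ := ih
    obtain ⟨l'', hw', hl''⟩ := exists_word_of_swap hs l' hl'
    exact ⟨l'', hw'.trans hw, hl''⟩

theorem exists_shorter_word {l : List (JIdx n)} {x y : List (Set ℕ)} {A : Set ℕ}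
    (h : labels l = x ++ A :: A :: y) : ∃ l', word l' = word l ∧ l'.length + 2 = l.length := by
  induction x generalizing l with
  | nil =>
    rcases l with _ | ⟨a, _ | ⟨b, l⟩⟩ <;>
      simp only [labels, List.nil_append, List.cons.injEq, reduceCtorEq, and_false] at h
    obtain ⟨h₁, h₂, -⟩ := h
    rw [← h₂, word_cons, state_fst_of_mul, Equiv.Perm.coe_mul, Set.preimage_comp] at h₁
    replace h₁ : b.rev ⁻¹' a.interval = b.interval :=
      Set.preimage_injective.mpr (Equiv.surjective _) h₁
    have hab : a = b := JIdx.interval_injective <| by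
      rw [← b.rev_preimage_rev_preimage a.interval, h₁, b.rev_preimage_interval_self]
    subst hab
    exact ⟨l, by simp [← mul_assoc, of_mul_self], rfl⟩
  | cons B x ih =>
    rcases l with _ | ⟨a, l⟩ <;> simp only [labels, List.cons_append, List.cons.injEq,
      reduceCtorEq] at h
    obtain ⟨l', hw, hlen⟩ := ih h.2
    exact ⟨a :: l', by simp [hw], by simp [hlen]⟩

theorem word_eq_one_of_state_eq {l : List (JIdx n)} (h : state (word l) = CactusState.init) :
    word l = 1 := by
  induction hN : l.length using Nat.strong_induction_on generalizing l with
  | _ N ih =>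
  have htrace :
      (labels l).foldr (Trace.leftMul _) (Trace.mk _ []) = Trace.mk (laminarGraph ℕ) [] := by
    rw [← state_word, h]
    rfl
  rcases Trace.foldr_leftMul_eq_mk_or_exists_pair (labels l) with hnil | ⟨x, A, y, hxy⟩
  · have : l = [] := by simpa using congrArg Trace.length (hnil.symm.trans htrace)
    simp [this, word]
  · obtain ⟨l₁, hw₁, hl₁⟩ := exists_word_of_mk_eq hxy
    obtain ⟨l₂, hw₂, hlen⟩ := exists_shorter_word hl₁
    have hlen₁ := congrArg List.length hl₁
    have hlen₂ := congrArg Trace.length hxy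
    simp only [length_labels, Trace.length_mk] at hlen₁ hlen₂
    rw [← hw₁, ← hw₂]
    exact ih l₂.length (by omega) (by rw [hw₂, hw₁, h]) rfl

end JGroup

theorem cactus_embeds_in_virtualCactus_general (n : ℕ) :
    ∃ f : JGroup n →* VJGroup n,
      (∀ g : JIdx n, f (PresentedGroup.of g) = PresentedGroup.of (Sum.inl g)) ∧
      Function.Injective f := by
  refine ⟨JGroup.iota n, fun g => PresentedGroup.toGroup.of _,
    (injective_iff_map_eq_one _).mpr fun g hg => ?_⟩
  obtain ⟨l, rfl⟩ := JGroup.exists_word g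
  exact JGroup.word_eq_one_of_state_eq (by rw [JGroup.state, hg, map_one]; rfl)

/-- **Corollary 3.9** (Ilin–Kamnitzer–Li–Przytycki–Rybnikov). For `n ≥ 2`, the natural
homomorphism `ι_J : J_n → VJ_n` from the cactus group to the virtual cactus group, sending
`x_{p,q}` to `x_{p,q}`, is injective. -/
theorem cactus_embeds_in_virtualCactus (n : ℕ) (hn : 2 ≤ n) :
    ∃ f : JGroup n →* VJGroup n,
      (∀ g : JIdx n, f (PresentedGroup.of g) = PresentedGroup.of (Sum.inl g)) ∧
      Function.Injective f :=
  cactus_embeds_in_virtualCactus_general n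
end

section
/- Let Γ = (Γ, ≤, μ, (φ_x)_{x∈V(Γ)}) be a trickle graph, let x, y, z ∈ V(Γ) with z ≤ y ≤ x, and let a, b ∈ ℤ. Then (φ_x^a ∘ φ_y^b)(z) = (φ_{φ_x^a(y)}^b ∘ φ_x^a)(z). -/
open scoped Classical

universe u

/-! Both exponents are handled by one principle: a map that semiconjugates the actions of
`g` and `h` on a `g`-invariant set also semiconjugates those of all their powers. Applied to
`φ_x` semiconjugating `φ_y` to `φ_{φ_x(y)}` on `{w | w ≤ y}` (condition (g), extended to
non-strict inequalities), it gives the exponent `b`; applied to `(y, z) ↦ φ_y^b(z)`, which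
intertwines the diagonal action of `φ_x` on `{(y, z) | z ≤ y ≤ x}` with `φ_x`, it gives `a`. -/

section Semiconj

variable {G H α β : Type*} {f : α → β} {S : Set α}

theorem apply_pow_smul_of_semiconj_on [Monoid G] [Monoid H] [MulAction G α] [MulAction H β]
    {g : G} {h : H} (hS : ∀ w ∈ S, g • w ∈ S) (hf : ∀ w ∈ S, f (g • w) = h • f w) :
    ∀ (n : ℕ) {w : α}, w ∈ S → f (g ^ n • w) = h ^ n • f w
  | 0, _, _ => by simp only [pow_zero, one_smul]
  | n + 1, w, hw => by
    rw [pow_succ, mul_smul, apply_pow_smul_of_semiconj_on hS hf n (hS w hw), hf w hw,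
      ← mul_smul, ← pow_succ]

theorem apply_zpow_smul_of_semiconj_on [Group G] [Group H] [MulAction G α] [MulAction H β]
    {g : G} {h : H} (hS : ∀ w, g • w ∈ S ↔ w ∈ S) (hf : ∀ w ∈ S, f (g • w) = h • f w)
    (n : ℤ) {w : α} (hw : w ∈ S) : f (g ^ n • w) = h ^ n • f w := by
  have hS_inv : ∀ w ∈ S, g⁻¹ • w ∈ S := fun w hw => (hS _).1 (by rwa [smul_inv_smul])
  have hf_inv : ∀ w ∈ S, f (g⁻¹ • w) = h⁻¹ • f w := fun w hw => by
    rw [eq_inv_smul_iff, ← hf _ (hS_inv w hw), smul_inv_smul]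
  obtain ⟨n, rfl | rfl⟩ := n.eq_nat_or_neg
  · simpa only [zpow_natCast] using
      apply_pow_smul_of_semiconj_on (fun w hw => (hS w).2 hw) hf n hw
  · simpa only [zpow_neg, zpow_natCast, inv_pow] using
      apply_pow_smul_of_semiconj_on hS_inv hf_inv n hw

end Semiconj

namespace TrickleGraph

variable {V : Type u} [PartialOrder V] (T : TrickleGraph V)

theorem phi_self (x : V) : T.phi x x = x :=
  by_contra fun h => lt_irrefl x (T.lt_of_phi_ne x x (Or.inl rfl) h)

theorem inStar_of_le {x w : V} (h : w ≤ x) : T.graph.InStar x w :=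
  h.lt_or_eq.elim (fun h => Or.inr (T.adj_of_lt w x h).symm) Or.inl

variable {T}

theorem phi_le_phi_iff {x y z : V} (hyx : y ≤ x) : T.phi x z ≤ T.phi x y ↔ z ≤ y := by
  by_cases hz : T.graph.InStar x z
  · exact T.le_phi_iff x y z (T.inStar_of_le hyx) hz
  · have hyx' : T.phi x y ≤ x := by
      simpa only [phi_self] using (T.le_phi_iff x x y (Or.inl rfl) (T.inStar_of_le hyx)).2 hyx
    rw [T.phi_apply_of_not_inStar x z hz]
    exact iff_of_false (fun h => hz (T.inStar_of_le (h.trans hyx')))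
      (fun h => hz (T.inStar_of_le (h.trans hyx)))

theorem phi_le_self_iff {x z : V} : T.phi x z ≤ x ↔ z ≤ x := by
  simpa only [phi_self] using phi_le_phi_iff (T := T) (le_refl x) (z := z)

theorem phi_phi_of_le {x y z : V} (hzy : z ≤ y) (hyx : y ≤ x) :
    T.phi x (T.phi y z) = T.phi (T.phi x y) (T.phi x z) := by
  rcases hzy.lt_or_eq with hzy | rfl
  · rcases hyx.lt_or_eq with hyx | rfl
    · exact T.phi_phi x y z hzy hyx
    · rw [T.phi_self]
  · rw [T.phi_self, T.phi_self]

theorem phi_phi_zpow {x y z : V} (hzy : z ≤ y) (hyx : y ≤ x) (b : ℤ) :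
    T.phi x ((T.phi y ^ b) z) = (T.phi (T.phi x y) ^ b) (T.phi x z) :=
  apply_zpow_smul_of_semiconj_on (f := T.phi x) (g := T.phi y) (h := T.phi (T.phi x y))
    (S := Set.Iic y) (fun _ => phi_le_self_iff) (fun _ hw => phi_phi_of_le hw hyx) b hzy

end TrickleGraph

/-- **Lemma 4.7.** In a trickle graph, if `z ≤ y ≤ x` then
`(φ_x^a ∘ φ_y^b)(z) = (φ_{φ_x^a(y)}^b ∘ φ_x^a)(z)` for all integers `a, b`. -/
theorem TrickleGraph.phi_zpow_phi_zpow {V : Type u} [PartialOrder V] (T : TrickleGraph V)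
    (x y z : V) (hzy : z ≤ y) (hyx : y ≤ x) (a b : ℤ) :
    (T.phi x ^ a) ((T.phi y ^ b) z) =
      (T.phi ((T.phi x ^ a) y) ^ b) ((T.phi x ^ a) z) := by
  refine (apply_zpow_smul_of_semiconj_on (f := fun p : V × V => (T.phi p.1 ^ b) p.2)
    (g := T.phi x) (h := T.phi x) (S := {p | p.2 ≤ p.1 ∧ p.1 ≤ x}) (fun p => ?_)
    (fun p hp => (phi_phi_zpow hp.1 hp.2 b).symm) a (w := (y, z)) ⟨hzy, hyx⟩).symm
  simp only [Set.mem_ofPred_eq, Prod.smul_fst, Prod.smul_snd, Equiv.Perm.smul_def,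
    phi_le_self_iff]
  exact and_congr_left phi_le_phi_iff
end
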